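/- Let F : ℝ^d → ℝ be bounded, globally Lipschitz and strictly positive with 0 < inf F ≤ sup F < ∞. Define the selection operator G_F[f](dx) := e^{F(x)} f(dx) / ∫ e^F df for probability measures f. Then there exists a constant C depending only on F such that for all probability measures f, g on ℝ^d, ‖G_F[f] - G_F[g]‖_BL ≤ C ‖f - g‖_BL. -/
import Mathlib

open MeasureTheory Real
open scoped NNReal ENNReal

/-- Bounded-Lipschitz (flat) norm of the difference of two measures. -/
noncomputable def BLdist {d : ℕ} (f g : Measure (EuclideanSpace ℝ (Fin d))) : ℝ :=
  sSup { r : ℝ | ∃ φ : EuclideanSpace ℝ (Fin d) → ℝ,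
    (∀ x, |φ x| < 1/2) ∧ (∃ K : ℝ≥0, (K : ℝ) < 1 ∧ LipschitzWith K φ) ∧
    r = (∫ x, φ x ∂f) - ∫ x, φ x ∂g }

/-- Exponential selection operator `G_F[f](dx) = e^{F(x)} f(dx) / ∫ e^F df`. -/
noncomputable def selectOp {d : ℕ} (F : EuclideanSpace ℝ (Fin d) → ℝ)
    (f : Measure (EuclideanSpace ℝ (Fin d))) : Measure (EuclideanSpace ℝ (Fin d)) :=
  f.withDensity (fun x => ENNReal.ofReal (exp (F x) / ∫ y, exp (F y) ∂f))

namespace SelectOpAux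

variable {d : ℕ}

lemma integrable_of_bdd {f : Measure (EuclideanSpace ℝ (Fin d))} [IsFiniteMeasure f]
    {χ : EuclideanSpace ℝ (Fin d) → ℝ} (hc : Continuous χ) {a : ℝ} (ha : ∀ x, |χ x| ≤ a) :
    Integrable χ f :=
  (integrable_const a).mono' hc.aestronglyMeasurable
    (Filter.Eventually.of_forall fun x => by simpa [Real.norm_eq_abs] using ha x)

lemma zero_mem_BLset (f g : Measure (EuclideanSpace ℝ (Fin d))) :
    (0:ℝ) ∈ { r : ℝ | ∃ φ : EuclideanSpace ℝ (Fin d) → ℝ,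
      (∀ x, |φ x| < 1/2) ∧ (∃ K : ℝ≥0, (K : ℝ) < 1 ∧ LipschitzWith K φ) ∧
      r = (∫ x, φ x ∂f) - ∫ x, φ x ∂g } :=
  ⟨fun _ => 0, fun _ => by norm_num, ⟨0, by norm_num, LipschitzWith.const' 0⟩, by simp⟩

lemma BLset_bddAbove (f g : Measure (EuclideanSpace ℝ (Fin d)))
    [IsProbabilityMeasure f] [IsProbabilityMeasure g] :
    BddAbove { r : ℝ | ∃ φ : EuclideanSpace ℝ (Fin d) → ℝ,
      (∀ x, |φ x| < 1/2) ∧ (∃ K : ℝ≥0, (K : ℝ) < 1 ∧ LipschitzWith K φ) ∧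
      r = (∫ x, φ x ∂f) - ∫ x, φ x ∂g } := by
  refine ⟨1, fun r hr => ?_⟩
  obtain ⟨φ, hφ, ⟨K, hK, hlip⟩, rfl⟩ := hr
  have h1 : ‖∫ x, φ x ∂f‖ ≤ 1/2 := by
    have := norm_integral_le_of_norm_le_const (μ := f) (f := φ) (C := 1/2)
      (Filter.Eventually.of_forall fun x => by
        rw [Real.norm_eq_abs]; exact (hφ x).le)
    simpa using this
  have h2 : ‖∫ x, φ x ∂g‖ ≤ 1/2 := by
    have := norm_integral_le_of_norm_le_const (μ := g) (f := φ) (C := 1/2)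
      (Filter.Eventually.of_forall fun x => by
        rw [Real.norm_eq_abs]; exact (hφ x).le)
    simpa using this
  rw [Real.norm_eq_abs, abs_le] at h1 h2
  linarith [h1.1, h1.2, h2.1, h2.2]

lemma BLdist_nonneg (f g : Measure (EuclideanSpace ℝ (Fin d)))
    [IsProbabilityMeasure f] [IsProbabilityMeasure g] : 0 ≤ BLdist f g :=
  le_csSup (BLset_bddAbove f g) (zero_mem_BLset f g)

lemma key_bound (f g : Measure (EuclideanSpace ℝ (Fin d)))
    [IsProbabilityMeasure f] [IsProbabilityMeasure g]
    (χ : EuclideanSpace ℝ (Fin d) → ℝ) (a b c : ℝ) (ha : ∀ x, |χ x| ≤ a) (hb : 0 ≤ b)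
    (hlip : ∀ x y, |χ x - χ y| ≤ b * dist x y)
    (hca : 2 * a < c) (hcb : b < c) :
    (∫ x, χ x ∂f) - ∫ x, χ x ∂g ≤ c * BLdist f g := by
  have ha0 : 0 ≤ a := (abs_nonneg (χ 0)).trans (ha 0)
  have hc0 : 0 < c := lt_of_le_of_lt (by linarith) hca
  set φ : EuclideanSpace ℝ (Fin d) → ℝ := fun x => c⁻¹ * χ x with hφdef
  have hmem : (∫ x, φ x ∂f) - (∫ x, φ x ∂g) ∈
      { r : ℝ | ∃ φ : EuclideanSpace ℝ (Fin d) → ℝ,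
        (∀ x, |φ x| < 1/2) ∧ (∃ K : ℝ≥0, (K : ℝ) < 1 ∧ LipschitzWith K φ) ∧
        r = (∫ x, φ x ∂f) - ∫ x, φ x ∂g } := by
    refine ⟨φ, fun x => ?_, ⟨(b/c).toNNReal, ?_, ?_⟩, rfl⟩
    · have : |φ x| ≤ c⁻¹ * a := by
        rw [hφdef, abs_mul, abs_of_pos (inv_pos.mpr hc0)]
        exact mul_le_mul_of_nonneg_left (ha x) (inv_pos.mpr hc0).le
      have h2 : c⁻¹ * a < 1/2 := by
        rw [inv_mul_eq_div]
        exact (div_lt_div_iff₀ hc0 two_pos).mpr (by linarith)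
      linarith
    · rw [Real.coe_toNNReal _ (div_nonneg hb hc0.le)]
      exact (div_lt_one hc0).mpr hcb
    · apply LipschitzWith.of_dist_le_mul
      intro x y
      rw [Real.coe_toNNReal _ (div_nonneg hb hc0.le), Real.dist_eq]
      have : |φ x - φ y| = c⁻¹ * |χ x - χ y| := by
        rw [hφdef]
        rw [← mul_sub, abs_mul, abs_of_pos (inv_pos.mpr hc0)]
      rw [this]
      calc c⁻¹ * |χ x - χ y| ≤ c⁻¹ * (b * dist x y) :=
            mul_le_mul_of_nonneg_left (hlip x y) (inv_pos.mpr hc0).le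
        _ = b / c * dist x y := by ring
  have hle : (∫ x, φ x ∂f) - (∫ x, φ x ∂g) ≤ BLdist f g :=
    le_csSup (BLset_bddAbove f g) hmem
  have hf1 : ∫ x, φ x ∂f = c⁻¹ * ∫ x, χ x ∂f := integral_const_mul _ _
  have hg1 : ∫ x, φ x ∂g = c⁻¹ * ∫ x, χ x ∂g := integral_const_mul _ _
  rw [hf1, hg1] at hle
  have := mul_le_mul_of_nonneg_left hle hc0.le
  calc (∫ x, χ x ∂f) - ∫ x, χ x ∂g
      = c * (c⁻¹ * (∫ x, χ x ∂f) - c⁻¹ * ∫ x, χ x ∂g) := by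
        field_simp
    _ ≤ c * BLdist f g := this

lemma integral_selectOp {F : EuclideanSpace ℝ (Fin d) → ℝ} (hFc : Continuous F)
    (f : Measure (EuclideanSpace ℝ (Fin d))) (φ : EuclideanSpace ℝ (Fin d) → ℝ) :
    ∫ x, φ x ∂(selectOp F f)
      = ∫ x, (exp (F x) / ∫ y, exp (F y) ∂f) * φ x ∂f := by
  have hA : 0 ≤ ∫ y, exp (F y) ∂f := integral_nonneg fun y => (exp_pos _).le
  have hmeas : Measurable fun x => (exp (F x) / ∫ y, exp (F y) ∂f).toNNReal :=
    measurable_real_toNNReal.comp ((Real.continuous_exp.comp hFc).measurable.div_const _)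
  rw [selectOp, show (fun x => ENNReal.ofReal (exp (F x) / ∫ y, exp (F y) ∂f))
      = fun x => ((exp (F x) / ∫ y, exp (F y) ∂f).toNNReal : ℝ≥0∞) from rfl]
  rw [integral_withDensity_eq_integral_smul hmeas]
  congr 1; ext x
  simp [NNReal.smul_def, Real.coe_toNNReal _ (div_nonneg (exp_pos _).le hA)]

lemma exp_dist_le {s t Mx : ℝ} (hs : s ≤ Mx) (ht : t ≤ Mx) :
    |exp s - exp t| ≤ exp Mx * |s - t| := by
  wlog h : t ≤ s
  · rw [abs_sub_comm, abs_sub_comm s t]; exact this ht hs (le_of_not_ge h)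
  rw [abs_of_nonneg (sub_nonneg.mpr (exp_le_exp.mpr h)), abs_of_nonneg (sub_nonneg.mpr h)]
  have h1 : (t - s) + 1 ≤ exp (t - s) := add_one_le_exp _
  have h2 : exp s * exp (t - s) = exp t := by rw [← exp_add]; ring_nf
  nlinarith [exp_pos s, exp_le_exp.mpr hs, exp_pos Mx]

end SelectOpAux

open SelectOpAux in
/-- Selection stability: if `F` is bounded, globally Lipschitz and strictly
positive, the selection operator is Lipschitz with respect to the
bounded-Lipschitz norm, with a constant depending only on `F`. -/
theorem selectOp_BL_stability {d : ℕ} (F : EuclideanSpace ℝ (Fin d) → ℝ)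
    (m M : ℝ) (hm : 0 < m) (hFm : ∀ x, m ≤ F x) (hFM : ∀ x, F x ≤ M)
    (K : ℝ≥0) (hLip : LipschitzWith K F) :
    ∃ C > 0, ∀ f g : Measure (EuclideanSpace ℝ (Fin d)),
      IsProbabilityMeasure f → IsProbabilityMeasure g →
      BLdist (selectOp F f) (selectOp F g) ≤ C * BLdist f g := by
  have hFc : Continuous F := hLip.continuous
  have hK0 : (0:ℝ) ≤ K := K.coe_nonneg
  set c : ℝ := exp M * ((K:ℝ) + 3) with hcdef
  have hc0 : 0 < c := by positivity
  refine ⟨c / exp m + (exp M / 2) * c / (exp m * exp m), by positivity, ?_⟩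
  intro f g hf hg
  haveI := hf; haveI := hg
  set D : ℝ := BLdist f g with hDdef
  have hD0 : 0 ≤ D := BLdist_nonneg f g
  -- bounds on exp ∘ F
  have heF_bd : ∀ x, |exp (F x)| ≤ exp M := fun x => by
    rw [abs_of_pos (exp_pos _)]; exact exp_le_exp.mpr (hFM x)
  have heF_lip : ∀ x y, |exp (F x) - exp (F y)| ≤ exp M * (K:ℝ) * dist x y := by
    intro x y
    calc |exp (F x) - exp (F y)| ≤ exp M * |F x - F y| :=
          exp_dist_le (hFM x) (hFM y)
      _ ≤ exp M * ((K:ℝ) * dist x y) := by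
          apply mul_le_mul_of_nonneg_left _ (exp_pos M).le
          rw [← Real.dist_eq]; exact hLip.dist_le_mul x y
      _ = exp M * (K:ℝ) * dist x y := by ring
  have heF_cont : Continuous fun x => exp (F x) := Real.continuous_exp.comp hFc
  -- integral of exp ∘ F, bounds
  have hintf : Integrable (fun x => exp (F x)) f := integrable_of_bdd heF_cont heF_bd
  have hintg : Integrable (fun x => exp (F x)) g := integrable_of_bdd heF_cont heF_bd
  set A : ℝ := ∫ y, exp (F y) ∂f with hAdef
  set B : ℝ := ∫ y, exp (F y) ∂g with hBdef
  have hAlb : exp m ≤ A := by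
    have := integral_mono (μ := f) (integrable_const (exp m)) hintf
      (fun x => exp_le_exp.mpr (hFm x))
    simpa using this
  have hBlb : exp m ≤ B := by
    have := integral_mono (μ := g) (integrable_const (exp m)) hintg
      (fun x => exp_le_exp.mpr (hFm x))
    simpa using this
  have hA0 : 0 < A := lt_of_lt_of_le (exp_pos m) hAlb
  have hB0 : 0 < B := lt_of_lt_of_le (exp_pos m) hBlb
  -- difference of the normalisations
  have habs_AB : |A - B| ≤ c * D := by
    have h1 : A - B ≤ c * D := key_bound f g _ (exp M) (exp M * (K:ℝ)) c
      heF_bd (by positivity) heF_lip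
      (by rw [hcdef]; nlinarith [exp_pos M]) (by rw [hcdef]; nlinarith [exp_pos M])
    have h2 : B - A ≤ c * D := by
      have := key_bound f g (fun x => -exp (F x)) (exp M) (exp M * (K:ℝ)) c
        (fun x => by simpa using heF_bd x) (by positivity)
        (fun x y => by
          have := heF_lip x y
          rw [show -exp (F x) - -exp (F y) = -(exp (F x) - exp (F y)) by ring, abs_neg]
          exact this)
        (by rw [hcdef]; nlinarith [exp_pos M]) (by rw [hcdef]; nlinarith [exp_pos M])
      rw [integral_neg, integral_neg, ← hAdef, ← hBdef, ← hDdef] at this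
      linarith
    rw [abs_sub_le_iff]; exact ⟨h1, h2⟩
  rw [show BLdist (selectOp F f) (selectOp F g) = sSup _ from rfl]
  apply csSup_le ⟨0, zero_mem_BLset _ _⟩
  rintro r ⟨φ, hφ, ⟨k, hk, hφlip⟩, rfl⟩
  have hφcont : Continuous φ := hφlip.continuous
  -- the weighted test function ψ
  set ψ : EuclideanSpace ℝ (Fin d) → ℝ := fun x => exp (F x) * φ x with hψdef
  have hψ_bd : ∀ x, |ψ x| ≤ exp M / 2 := by
    intro x
    rw [hψdef, abs_mul]
    calc |exp (F x)| * |φ x| ≤ exp M * (1/2) := by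
          apply mul_le_mul (heF_bd x) (hφ x).le (abs_nonneg _) (exp_pos M).le
      _ = exp M / 2 := by ring
  have hψ_lip : ∀ x y, |ψ x - ψ y| ≤ exp M * ((K:ℝ)/2 + 1) * dist x y := by
    intro x y
    have hsplit : ψ x - ψ y = φ y * (exp (F x) - exp (F y)) + exp (F x) * (φ x - φ y) := by
      rw [hψdef]; ring
    have hφdist : |φ x - φ y| ≤ dist x y := by
      rw [← Real.dist_eq]
      calc dist (φ x) (φ y) ≤ (k:ℝ) * dist x y := hφlip.dist_le_mul x y
        _ ≤ 1 * dist x y := mul_le_mul_of_nonneg_right hk.le dist_nonneg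
        _ = dist x y := one_mul _
    calc |ψ x - ψ y| ≤ |φ y * (exp (F x) - exp (F y))| + |exp (F x) * (φ x - φ y)| := by
          rw [hsplit]; exact abs_add_le _ _
      _ = |φ y| * |exp (F x) - exp (F y)| + |exp (F x)| * |φ x - φ y| := by
          rw [abs_mul, abs_mul]
      _ ≤ (1/2) * (exp M * (K:ℝ) * dist x y) + exp M * dist x y := by
          gcongr
          · exact (hφ y).le
          · exact heF_lip x y
          · exact heF_bd x
      _ = exp M * ((K:ℝ)/2 + 1) * dist x y := by ring
  set P : ℝ := ∫ x, ψ x ∂f with hPdef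
  set Q : ℝ := ∫ x, ψ x ∂g with hQdef
  have habs_PQ : |P - Q| ≤ c * D := by
    have h1 : P - Q ≤ c * D := key_bound f g ψ (exp M / 2) (exp M * ((K:ℝ)/2 + 1)) c
      hψ_bd (by positivity) hψ_lip
      (by rw [hcdef]; nlinarith [exp_pos M]) (by rw [hcdef]; nlinarith [exp_pos M])
    have h2 : Q - P ≤ c * D := by
      have := key_bound f g (fun x => -ψ x) (exp M / 2) (exp M * ((K:ℝ)/2 + 1)) c
        (fun x => by simpa using hψ_bd x) (by positivity)
        (fun x y => by
          rw [show -ψ x - -ψ y = -(ψ x - ψ y) by ring, abs_neg]; exact hψ_lip x y)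
        (by rw [hcdef]; nlinarith [exp_pos M]) (by rw [hcdef]; nlinarith [exp_pos M])
      rw [integral_neg, integral_neg, ← hPdef, ← hQdef, ← hDdef] at this
      linarith
    rw [abs_sub_le_iff]; exact ⟨h1, h2⟩
  have hQ_bd : |Q| ≤ exp M / 2 := by
    have := norm_integral_le_of_norm_le_const (μ := g) (f := ψ) (C := exp M / 2)
      (Filter.Eventually.of_forall fun x => by
        rw [Real.norm_eq_abs]; exact hψ_bd x)
    rw [Real.norm_eq_abs, ← hQdef] at this
    simpa using this
  -- compute r
  have hrf : ∫ x, φ x ∂(selectOp F f) = A⁻¹ * P := by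
    rw [integral_selectOp hFc f φ, hPdef]
    rw [show (fun x => (exp (F x) / A) * φ x) = fun x => A⁻¹ * (exp (F x) * φ x) by
      funext x; ring]
    exact integral_const_mul _ _
  have hrg : ∫ x, φ x ∂(selectOp F g) = B⁻¹ * Q := by
    rw [integral_selectOp hFc g φ, hQdef]
    rw [show (fun x => (exp (F x) / B) * φ x) = fun x => B⁻¹ * (exp (F x) * φ x) by
      funext x; ring]
    exact integral_const_mul _ _
  rw [hrf, hrg]
  have hsplit2 : A⁻¹ * P - B⁻¹ * Q = (P - Q) / A + Q * (B - A) / (A * B) := by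
    field_simp
    ring
  rw [hsplit2]
  have t1 : (P - Q) / A ≤ c * D / exp m :=
    div_le_div₀ (by positivity) ((le_abs_self _).trans habs_PQ) (exp_pos m) hAlb
  have t2 : Q * (B - A) / (A * B) ≤ (exp M / 2) * (c * D) / (exp m * exp m) := by
    apply div_le_div₀ (by positivity) _ (by positivity)
      (mul_le_mul hAlb hBlb (exp_pos m).le hA0.le)
    calc Q * (B - A) ≤ |Q * (B - A)| := le_abs_self _
      _ = |Q| * |B - A| := abs_mul _ _
      _ ≤ (exp M / 2) * (c * D) := by
          apply mul_le_mul hQ_bd _ (abs_nonneg _) (by positivity)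
          rw [abs_sub_comm]; exact habs_AB
  calc (P - Q) / A + Q * (B - A) / (A * B)
      ≤ c * D / exp m + (exp M / 2) * (c * D) / (exp m * exp m) := add_le_add t1 t2
    _ = (c / exp m + (exp M / 2) * c / (exp m * exp m)) * D := by ring
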